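/- If M ∈ ℝ^{K×K} is nonnegative and there exist t > 0 and p ∈ ℝ₊₊^K with p = t(Mp + u) for some u ∈ ℝ₊₊^K, then t·ρ(M) < 1, i.e., the spectral radius of tM is strictly less than 1. -/

import Mathlib

/-!
Since `t • M p = p - t • u < p` componentwise and the index set is finite, `t • M p ≤ λ • p` for
some `λ < 1`. For a nonnegative matrix, a positive vector with `M p ≤ c • p` bounds every complex
eigenvalue by `c`: if `M v = μ v` and `k` maximizes `|v j| / p j`, then `|v| ≤ r • p` with
`r = |v k| / p k`, so `|μ| |v k| ≤ (M |v|) k ≤ r (M p) k ≤ c |v k|`.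
-/

open scoped ENNReal

/-- The spectral radius of a real square matrix, computed over `ℂ`. -/
noncomputable def specRad {K : ℕ} (M : Matrix (Fin K) (Fin K) ℝ) : ℝ≥0∞ :=
  spectralRadius ℂ (Matrix.toEuclideanCLM (𝕜 := ℂ) (M.map (algebraMap ℝ ℂ)))

namespace Matrix

variable {n : Type*} [Fintype n]

theorem norm_map_ofReal_mulVec_le {M : Matrix n n ℝ} (hM : ∀ i j, 0 ≤ M i j) (v : n → ℂ)
    (i : n) : ‖(M.map (algebraMap ℝ ℂ) *ᵥ v) i‖ ≤ (M *ᵥ fun j ↦ ‖v j‖) i := by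
  simp only [mulVec, dotProduct]
  refine (norm_sum_le _ _).trans_eq (Finset.sum_congr rfl fun j _ ↦ ?_)
  simp [abs_of_nonneg (hM i j)]

theorem mulVec_le_mulVec_of_nonneg {M : Matrix n n ℝ} (hM : ∀ i j, 0 ≤ M i j) {v w : n → ℝ}
    (hvw : ∀ j, v j ≤ w j) (i : n) : (M *ᵥ v) i ≤ (M *ᵥ w) i :=
  Finset.sum_le_sum fun j _ ↦ mul_le_mul_of_nonneg_left (hvw j) (hM i j)

theorem norm_le_of_mem_spectrum_map_of_mulVec_le [DecidableEq n] {M : Matrix n n ℝ}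
    (hM : ∀ i j, 0 ≤ M i j) {p : n → ℝ} (hp : ∀ i, 0 < p i) {c : ℝ}
    (hMp : ∀ i, (M *ᵥ p) i ≤ c * p i) {μ : ℂ}
    (hμ : μ ∈ spectrum ℂ (M.map (algebraMap ℝ ℂ))) : ‖μ‖ ≤ c := by
  rw [← spectrum_toLin', ← Module.End.hasEigenvalue_iff_mem_spectrum] at hμ
  obtain ⟨v, hv, hv0⟩ := hμ.exists_hasEigenvector
  rw [Module.End.mem_eigenspace_iff, toLin'_apply] at hv
  obtain ⟨j₀, hj₀⟩ := Function.ne_iff.mp hv0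
  have : Nonempty n := ⟨j₀⟩
  obtain ⟨k, hk⟩ := Finite.exists_max fun j ↦ ‖v j‖ / p j
  set r := ‖v k‖ / p k
  have hv_le : ∀ j, ‖v j‖ ≤ r * p j := fun j ↦ (div_le_iff₀ (hp j)).mp (hk j)
  have hr : 0 < r := pos_of_mul_pos_left ((norm_pos_iff.mpr hj₀).trans_le (hv_le j₀)) (hp j₀).le
  have hvk : ‖v k‖ = r * p k := (div_mul_cancel₀ _ (hp k).ne').symm
  refine le_of_mul_le_mul_right ?_ (mul_pos hr (hp k))
  calc ‖μ‖ * (r * p k) = ‖(M.map (algebraMap ℝ ℂ) *ᵥ v) k‖ := by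
        rw [hv, Pi.smul_apply, smul_eq_mul, norm_mul, hvk]
    _ ≤ (M *ᵥ fun j ↦ ‖v j‖) k := norm_map_ofReal_mulVec_le hM v k
    _ ≤ (M *ᵥ (r • p)) k := mulVec_le_mulVec_of_nonneg hM hv_le k
    _ = r * (M *ᵥ p) k := by rw [mulVec_smul, Pi.smul_apply, smul_eq_mul]
    _ ≤ r * (c * p k) := mul_le_mul_of_nonneg_left (hMp k) hr.le
    _ = c * (r * p k) := by ring

end Matrix

open Matrix

theorem specRad_le_of_mulVec_le {K : ℕ} {M : Matrix (Fin K) (Fin K) ℝ} (hM : ∀ i j, 0 ≤ M i j)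
    {p : Fin K → ℝ} (hp : ∀ i, 0 < p i) {c : ℝ} (hMp : ∀ i, (M *ᵥ p) i ≤ c * p i) :
    specRad M ≤ ENNReal.ofReal c := by
  rw [specRad, spectralRadius, AlgEquiv.spectrum_eq]
  refine iSup₂_le fun μ hμ ↦ ?_
  rw [← ENNReal.ofReal_coe_nnreal, coe_nnnorm]
  exact ENNReal.ofReal_le_ofReal (Matrix.norm_le_of_mem_spectrum_map_of_mulVec_le hM hp hMp hμ)

open Filter Topology in
theorem exists_lt_one_forall_le_mul {ι : Type*} [Finite ι] {a b : ι → ℝ} (hb : ∀ i, 0 < b i)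
    (hab : ∀ i, a i < b i) : ∃ c < 1, ∀ i, a i ≤ c * b i := by
  have : ∀ᶠ c in 𝓝[<] (1 : ℝ), ∀ i, a i / b i ≤ c :=
    eventually_all.mpr fun i ↦ nhdsWithin_le_nhds <|
      (eventually_gt_nhds ((div_lt_one (hb i)).mpr (hab i))).mono fun _ ↦ le_of_lt
  obtain ⟨c, hc, hc1⟩ := (this.and self_mem_nhdsWithin).exists
  exact ⟨c, hc1, fun i ↦ (div_le_iff₀ (hb i)).mp (hc i)⟩

theorem stmt_14 {K : ℕ} (M : Matrix (Fin K) (Fin K) ℝ) (hM : ∀ i j, 0 ≤ M i j)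
    (u : Fin K → ℝ) (hu : ∀ i, 0 < u i)
    (t : ℝ) (ht : 0 < t) (p : Fin K → ℝ) (hp : ∀ i, 0 < p i)
    (heq : p = t • (M.mulVec p + u)) :
    ENNReal.ofReal t * specRad M < 1 := by
  have htMp : ∀ i, t * (M *ᵥ p) i < p i := fun i ↦ by
    have hi := congrFun heq i
    simp only [Pi.smul_apply, Pi.add_apply, smul_eq_mul] at hi
    linarith [mul_pos ht (hu i)]
  obtain ⟨c, hc1, hc⟩ := exists_lt_one_forall_le_mul hp htMp
  have hMp : ∀ i, (M *ᵥ p) i ≤ c / t * p i := fun i ↦ by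
    rw [div_mul_eq_mul_div, le_div_iff₀ ht]
    linarith [hc i]
  calc ENNReal.ofReal t * specRad M ≤ ENNReal.ofReal t * ENNReal.ofReal (c / t) := by
        gcongr; exact specRad_le_of_mulVec_le hM hp hMp
    _ = ENNReal.ofReal c := by rw [← ENNReal.ofReal_mul ht.le, mul_div_cancel₀ c ht.ne']
    _ < 1 := ENNReal.ofReal_lt_one.mpr hc1
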